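/- Let α, β ∈ ℤ^n, let l, m be positive integers, let n₀ be a positive integer with α ≠ n₀β, and set p = -x^α(x^{-β} + x^{-2β} + ··· + x^{-n₀β}). Then 1/((1-x^α)^l (1-x^β)^m) = ∑_{t=1}^{l} binom(l+m-t-1, m-1) · p^m / ((1-x^α)^t (1-x^{α-n₀β})^{l+m-t}) + ∑_{t=1}^{m} binom(l+m-t-1, l-1) · p^{m-t} / ((1-x^β)^t (1-x^{α-n₀β})^{l+m-t}) as rational functions. -/

import Mathlib

open Finset

/-- The field of rational functions `ℚ(x₁, ..., xₙ)`. -/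
noncomputable abbrev RatFn (n : ℕ) : Type := FractionRing (MvPolynomial (Fin n) ℚ)

/-- The Laurent monomial `x^α = x₁^{α₁} ⋯ xₙ^{αₙ}` for `α ∈ ℤⁿ`. -/
noncomputable def xm {n : ℕ} (α : Fin n → ℤ) : RatFn n :=
  ∏ i, (algebraMap (MvPolynomial (Fin n) ℚ) (RatFn n) (MvPolynomial.X i)) ^ (α i)

/-!
With `A = 1 - x^α`, `B = 1 - x^β`, `C = 1 - x^(α - n₀β)`, the geometric sum `p` telescopes to
`A + p B = C`. Hence it suffices to decompose `1 / (X^l B^m)` whenever `X + p B = S` in a field.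
Clearing denominators, with `Y = p B` this is the identity `S^(l+m-1) = (X wins) + (Y wins)`
for `S = X + Y`: homogenised, it says that in repeated trials either `l` successes precede `m`
failures or vice versa. That identity follows by induction from `S = X + Y` and Pascal's rule.
-/

section Race

variable {R : Type*} [CommSemiring R]

/-- For `S = X + Y = 1` this is the probability that `a + 1` successes (probability `X`) occur
before `b + 1` failures (probability `Y`); `j` counts the unconstrained trials after the
decisive one, which pad every term to degree `a + b + 1`. -/
def raceSum (X Y S : R) (a b : ℕ) : R :=
  ∑ j ∈ range (b + 1), ((a + b - j).choose a : R) * X ^ (a + 1) * Y ^ (b - j) * S ^ j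

theorem raceSum_zero_right (X Y S : R) (a : ℕ) : raceSum X Y S a 0 = X ^ (a + 1) := by
  simp [raceSum]

theorem raceSum_zero_left_add_pow (X Y : R) (b : ℕ) :
    raceSum X Y (X + Y) 0 b + Y ^ (b + 1) = (X + Y) ^ (b + 1) := by
  rw [← geom_sum₂_mul_add, raceSum, sum_mul]
  congr 1
  refine sum_congr rfl fun j _ => ?_
  simp only [Nat.choose_zero_right, Nat.cast_one, zero_add, pow_one, Nat.add_sub_cancel]
  ring

theorem raceSum_succ_succ (X Y S : R) (a b : ℕ) :
    raceSum X Y S (a + 1) (b + 1) = X * raceSum X Y S a (b + 1) + Y * raceSum X Y S (a + 1) b := by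
  simp only [raceSum, mul_sum]
  rw [sum_range_succ, sum_range_succ (n := b + 1), add_right_comm _ (X * _), ← sum_add_distrib]
  congr 1
  · refine sum_congr rfl fun j hj => ?_
    obtain ⟨k, rfl⟩ : ∃ k, b = j + k := Nat.exists_eq_add_of_le (Nat.lt_succ_iff.1 (mem_range.1 hj))
    rw [show a + 1 + (j + k + 1) - j = a + k + 1 + 1 by omega,
      show a + (j + k + 1) - j = a + k + 1 by omega, show a + 1 + (j + k) - j = a + k + 1 by omega,
      show j + k + 1 - j = k + 1 by omega, show j + k - j = k by omega, Nat.choose_succ_succ']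
    push_cast
    ring
  · simp only [Nat.sub_self, Nat.add_sub_cancel, Nat.choose_self]
    ring

theorem add_pow_eq_raceSum_add_raceSum (X Y : R) :
    ∀ a b : ℕ, (X + Y) ^ (a + b + 1) = raceSum X Y (X + Y) a b + raceSum Y X (X + Y) b a
  | 0, b => by rw [raceSum_zero_right, zero_add, raceSum_zero_left_add_pow]
  | a + 1, 0 => by
    rw [raceSum_zero_right, add_comm X Y, add_zero, ← raceSum_zero_left_add_pow Y X, add_comm]
  | a + 1, b + 1 => by
    have h₁ := add_pow_eq_raceSum_add_raceSum X Y a (b + 1)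
    have h₂ := add_pow_eq_raceSum_add_raceSum X Y (a + 1) b
    calc (X + Y) ^ (a + 1 + (b + 1) + 1)
        = X * (X + Y) ^ (a + (b + 1) + 1) + Y * (X + Y) ^ (a + 1 + b + 1) := by ring
      _ = _ := by rw [h₁, h₂, raceSum_succ_succ, raceSum_succ_succ]; ring

end Race

section PartialFractions

variable {K : Type*} [Field K]

theorem raceSum_mul_mul_div {X Y S : K} (hX : X ≠ 0) (hY : Y ≠ 0) (hS : S ≠ 0) (c d : K)
    {l m : ℕ} (hl : 0 < l) (hm : 0 < m) :
    raceSum (c * X) (d * Y) S (l - 1) (m - 1) / (X ^ l * Y ^ m * S ^ (l + m - 1)) =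
      ∑ t ∈ Icc 1 m, ((l + m - t - 1).choose (l - 1) : K) * c ^ l * d ^ (m - t) *
        (Y ^ t * S ^ (l + m - t))⁻¹ := by
  obtain ⟨a, rfl⟩ : ∃ a, l = a + 1 := ⟨l - 1, by omega⟩
  obtain ⟨b, rfl⟩ : ∃ b, m = b + 1 := ⟨m - 1, by omega⟩
  rw [← Ico_add_one_right_eq_Icc, sum_Ico_eq_sum_range, raceSum, sum_div]
  simp only [Nat.add_sub_cancel]
  refine sum_congr rfl fun j hj => ?_
  obtain ⟨k, rfl⟩ : ∃ k, b = j + k := Nat.exists_eq_add_of_le (Nat.lt_succ_iff.1 (mem_range.1 hj))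
  rw [show a + (j + k) - j = a + k by omega, show j + k - j = k by omega,
    show a + 1 + (j + k + 1) - (1 + j) - 1 = a + k by omega,
    show j + k + 1 - (1 + j) = k by omega, show a + 1 + (j + k + 1) - (1 + j) = a + k + 1 by omega,
    show a + 1 + (j + k + 1) - 1 = a + 1 + k + j by omega]
  field_simp
  ring

theorem inv_pow_mul_pow_eq_sum {X B P S : K} (hX : X ≠ 0) (hB : B ≠ 0) (hS : S ≠ 0)
    (hXS : X + P * B = S) {l m : ℕ} (hl : 0 < l) (hm : 0 < m) :
    (X ^ l * B ^ m)⁻¹ =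
      ∑ t ∈ Icc 1 l, ((l + m - t - 1).choose (m - 1) : K) * P ^ m * (X ^ t * S ^ (l + m - t))⁻¹ +
      ∑ t ∈ Icc 1 m, ((l + m - t - 1).choose (l - 1) : K) * P ^ (m - t) *
        (B ^ t * S ^ (l + m - t))⁻¹ := by
  have key := add_pow_eq_raceSum_add_raceSum X (P * B) (l - 1) (m - 1)
  rw [hXS, show l - 1 + (m - 1) + 1 = l + m - 1 by omega] at key
  have hwin := raceSum_mul_mul_div hB hX hS P 1 hm hl
  have hlose := raceSum_mul_mul_div hX hB hS 1 P hl hm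
  rw [Nat.add_comm m l] at hwin
  simp only [one_mul, one_pow, mul_one] at hwin hlose
  rw [← hwin, ← hlose, mul_comm (B ^ m), ← add_div, add_comm, ← key]
  field_simp

theorem sum_range_inv_pow_succ_mul_one_sub {u : K} (hu : u ≠ 0) (N : ℕ) :
    (∑ j ∈ range N, u⁻¹ ^ (j + 1)) * (1 - u) = u⁻¹ ^ N - 1 := by
  rw [← geom_sum_mul, sum_mul, sum_mul]
  refine sum_congr rfl fun j _ => ?_
  rw [pow_succ, mul_assoc, mul_one_sub, inv_mul_cancel₀ hu]

end PartialFractions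

section Monomials

variable {n : ℕ}

theorem algebraMap_X_ne_zero (i : Fin n) :
    algebraMap (MvPolynomial (Fin n) ℚ) (RatFn n) (MvPolynomial.X i) ≠ 0 :=
  (map_ne_zero_iff _ (IsFractionRing.injective _ _)).2 (MvPolynomial.X_ne_zero i)

theorem xm_ne_zero (γ : Fin n → ℤ) : xm γ ≠ 0 :=
  prod_ne_zero_iff.2 fun i _ => zpow_ne_zero _ (algebraMap_X_ne_zero i)

theorem xm_add (γ δ : Fin n → ℤ) : xm (γ + δ) = xm γ * xm δ := by
  simp only [xm, ← prod_mul_distrib, Pi.add_apply, zpow_add₀ (algebraMap_X_ne_zero _)]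

theorem xm_zsmul (k : ℤ) (γ : Fin n → ℤ) : xm (k • γ) = xm γ ^ k := by
  simp only [xm, Pi.smul_apply, smul_eq_mul, mul_comm k, zpow_mul, prod_zpow]

end Monomials

theorem two_factor_multiplicity_general (n : ℕ) (α β : Fin n → ℤ) (l m n₀ : ℕ)
    (hl : 0 < l) (hm : 0 < m)
    (h1 : (1 : RatFn n) - xm α ≠ 0) (h2 : (1 : RatFn n) - xm β ≠ 0)
    (h3 : (1 : RatFn n) - xm (α - (n₀ : ℤ) • β) ≠ 0) :
    (((1 : RatFn n) - xm α) ^ l * ((1 : RatFn n) - xm β) ^ m)⁻¹ =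
      (∑ t ∈ Finset.Icc 1 l,
        ((l + m - t - 1).choose (m - 1) : RatFn n) *
          (-xm α * ∑ j ∈ Finset.range n₀, xm ((-(j + 1) : ℤ) • β)) ^ m *
          (((1 : RatFn n) - xm α) ^ t *
            ((1 : RatFn n) - xm (α - (n₀ : ℤ) • β)) ^ (l + m - t))⁻¹) +
      ∑ t ∈ Finset.Icc 1 m,
        ((l + m - t - 1).choose (l - 1) : RatFn n) *
          (-xm α * ∑ j ∈ Finset.range n₀, xm ((-(j + 1) : ℤ) • β)) ^ (m - t) *
          (((1 : RatFn n) - xm β) ^ t *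
            ((1 : RatFn n) - xm (α - (n₀ : ℤ) • β)) ^ (l + m - t))⁻¹ := by
  have hpow : ∀ k : ℕ, xm ((-k : ℤ) • β) = (xm β)⁻¹ ^ k := fun k => by
    rw [xm_zsmul, zpow_neg, zpow_natCast, inv_pow]
  have hsum : ∑ j ∈ range n₀, xm ((-(j + 1) : ℤ) • β) = ∑ j ∈ range n₀, (xm β)⁻¹ ^ (j + 1) :=
    sum_congr rfl fun j _ => by rw [← hpow, Nat.cast_succ]
  have hC : xm (α - (n₀ : ℤ) • β) = xm α * (xm β)⁻¹ ^ n₀ := by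
    rw [sub_eq_add_neg, ← neg_smul, xm_add, hpow]
  refine inv_pow_mul_pow_eq_sum h1 h2 h3 ?_ hl hm
  rw [hsum, hC]
  linear_combination (-xm α) * sum_range_inv_pow_succ_mul_one_sub (xm_ne_zero β) n₀

/-- Lemma (e): two-factor reduction formula with multiplicities and elongation. -/
theorem two_factor_multiplicity (n : ℕ) (α β : Fin n → ℤ) (l m n₀ : ℕ)
    (hl : 0 < l) (hm : 0 < m) (hn₀ : 0 < n₀)
    (hα : α ≠ 0) (hβ : β ≠ 0) (hne : α ≠ (n₀ : ℤ) • β)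
    (h1 : (1 : RatFn n) - xm α ≠ 0) (h2 : (1 : RatFn n) - xm β ≠ 0)
    (h3 : (1 : RatFn n) - xm (α - (n₀ : ℤ) • β) ≠ 0) :
    (((1 : RatFn n) - xm α) ^ l * ((1 : RatFn n) - xm β) ^ m)⁻¹ =
      (∑ t ∈ Finset.Icc 1 l,
        ((l + m - t - 1).choose (m - 1) : RatFn n) *
          (-xm α * ∑ j ∈ Finset.range n₀, xm ((-(j + 1) : ℤ) • β)) ^ m *
          (((1 : RatFn n) - xm α) ^ t *
            ((1 : RatFn n) - xm (α - (n₀ : ℤ) • β)) ^ (l + m - t))⁻¹) +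
      ∑ t ∈ Finset.Icc 1 m,
        ((l + m - t - 1).choose (l - 1) : RatFn n) *
          (-xm α * ∑ j ∈ Finset.range n₀, xm ((-(j + 1) : ℤ) • β)) ^ (m - t) *
          (((1 : RatFn n) - xm β) ^ t *
            ((1 : RatFn n) - xm (α - (n₀ : ℤ) • β)) ^ (l + m - t))⁻¹ :=
  two_factor_multiplicity_general n α β l m n₀ hl hm h1 h2 h3
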